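/- arXiv:2105.00597 — 3 statements merged into one kernel-verified Lean document; each statement's English description precedes it below -/
import Mathlib

section
/- Let $(X,\mu)$ be a finite measure space, $g:\mathbb{R}\to\mathbb{R}$ bounded, continuous, strictly increasing with $a<0<b$ as limits at $\mp\infty$, and for $w \in L^2(X)$ let $\mathcal{C}(w)$ denote the unique $c \in \mathbb{R}$ with $\int_X g(w + c)\,d\mu = 0$. If $w_n \to w_0$ in $L^2(X,\mu)$, then $\mathcal{C}(w_n) \to \mathcal{C}(w_0)$. -/
/-!
Write `F_w c = ∫ g (w + c) dμ`. Each `F_w` is monotone, and strictly so since `μ ≠ 0`. As `g` is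
Lipschitz, `|F_{wₙ} c - F_{w₀} c| ≤ L ‖wₙ - w₀‖₁`, which on a finite measure space is controlled
by `‖wₙ - w₀‖₂`; so `F_{wₙ} → F_{w₀}` pointwise. Since `F_{w₀}` is negative at `C w₀ - ε` and
positive at `C w₀ + ε`, so is `F_{wₙ}` for large `n`, which traps its zero `C wₙ` between them.
-/

open MeasureTheory Filter Topology
open scoped ENNReal NNReal

theorem tendsto_of_tendsto_monotone_of_apply_eq {ι α β : Type*} [LinearOrder α]
    [TopologicalSpace α] [OrderTopology α] [LinearOrder β] [TopologicalSpace β]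
    [OrderClosedTopology β] {l : Filter ι} {F : ι → α → β} {F₀ : α → β} {c : ι → α} {c₀ : α}
    {y : β} (hF : ∀ i, Monotone (F i)) (hF₀ : StrictMono F₀)
    (hlim : ∀ t, Tendsto (fun i => F i t) l (𝓝 (F₀ t)))
    (hc : ∀ i, F i (c i) = y) (hc₀ : F₀ c₀ = y) : Tendsto c l (𝓝 c₀) := by
  refine tendsto_order.2 ⟨fun t ht => ?_, fun t ht => ?_⟩
  · filter_upwards [(hlim t).eventually_lt_const (hc₀ ▸ hF₀ ht)] with i hi
    exact (hF i).reflect_lt (hc i ▸ hi)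
  · filter_upwards [(hlim t).eventually_const_lt (hc₀ ▸ hF₀ ht)] with i hi
    exact (hF i).reflect_lt (hc i ▸ hi)

section

variable {X : Type*} [MeasurableSpace X] {μ : Measure X}

theorem integral_lt_integral_of_forall_lt (hμ : μ ≠ 0) {f g : X → ℝ} (hf : Integrable f μ)
    (hg : Integrable g μ) (hlt : ∀ x, f x < g x) : ∫ x, f x ∂μ < ∫ x, g x ∂μ := by
  have hpos : ∀ x, 0 < g x - f x := fun x => sub_pos.2 (hlt x)
  have hsupp : Function.support (fun x => g x - f x) = Set.univ :=
    Set.eq_univ_of_forall fun x => (hpos x).ne'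
  have : 0 < ∫ x, (g x - f x) ∂μ := by
    rw [integral_pos_iff_support_of_nonneg (fun x => (hpos x).le) (hg.sub hf), hsupp]
    exact pos_iff_ne_zero.2 (Measure.measure_univ_ne_zero.2 hμ)
  rw [integral_sub hg hf] at this
  linarith

theorem monotone_integral_comp_add {g : ℝ → ℝ} (hg : Monotone g) {v : X → ℝ}
    (hint : ∀ c, Integrable (fun x => g (v x + c)) μ) :
    Monotone fun c => ∫ x, g (v x + c) ∂μ :=
  fun _ _ hcd => integral_mono (hint _) (hint _) fun _ => hg (add_le_add_right hcd _)

theorem strictMono_integral_comp_add (hμ : μ ≠ 0) {g : ℝ → ℝ} (hg : StrictMono g) {v : X → ℝ}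
    (hint : ∀ c, Integrable (fun x => g (v x + c)) μ) :
    StrictMono fun c => ∫ x, g (v x + c) ∂μ :=
  fun _ _ hcd => integral_lt_integral_of_forall_lt hμ (hint _) (hint _)
    fun _ => hg (add_lt_add_right hcd _)

variable {E F : Type*} [NormedAddCommGroup E] [NormedAddCommGroup F]

theorem integrable_comp_of_norm_le [IsFiniteMeasure μ] {g : E → F} (hg : Continuous g) {M : ℝ}
    (hM : ∀ t, ‖g t‖ ≤ M) {f : X → E} (hf : AEStronglyMeasurable f μ) :
    Integrable (fun x => g (f x)) μ :=
  Integrable.of_bound (hg.comp_aestronglyMeasurable hf) M (ae_of_all _ fun _ => hM _)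

theorem tendsto_eLpNorm_of_tendsto_eLpNorm_of_le [IsFiniteMeasure μ] {p q : ℝ≥0∞} (hpq : p ≤ q)
    {ι : Type*} {l : Filter ι} {f : ι → X → E} (hf : ∀ i, AEStronglyMeasurable (f i) μ)
    (h : Tendsto (fun i => eLpNorm (f i) q μ) l (𝓝 0)) :
    Tendsto (fun i => eLpNorm (f i) p μ) l (𝓝 0) := by
  obtain rfl | hp := eq_or_ne p 0
  · exact tendsto_const_nhds.congr fun i => (eLpNorm_exponent_zero (f := f i)).symm
  have hexp : 0 ≤ 1 / p.toReal - 1 / q.toReal := by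
    obtain rfl | hq := eq_or_ne q ∞
    · simp only [ENNReal.toReal_top, div_zero, sub_zero]
      positivity
    · exact sub_nonneg.2 <| one_div_le_one_div_of_le
        (ENNReal.toReal_pos hp (ne_top_of_le_ne_top hq hpq)) (ENNReal.toReal_mono hq hpq)
  have hfin : μ Set.univ ^ (1 / p.toReal - 1 / q.toReal) ≠ ∞ :=
    ENNReal.rpow_ne_top_of_nonneg hexp (measure_ne_top μ _)
  have hbound := ENNReal.Tendsto.mul_const h (Or.inr hfin)
  rw [zero_mul] at hbound
  exact tendsto_of_tendsto_of_tendsto_of_le_of_le tendsto_const_nhds hbound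
    (fun _ => zero_le) fun i => eLpNorm_le_eLpNorm_mul_rpow_measure_univ hpq (hf i)

theorem LipschitzWith.tendsto_eLpNorm_comp_sub {g : E → F} {K : ℝ≥0} (hg : LipschitzWith K g)
    {p : ℝ≥0∞} {ι : Type*} {l : Filter ι} {f : ι → X → E} {f₀ : X → E}
    (h : Tendsto (fun i => eLpNorm (fun x => f i x - f₀ x) p μ) l (𝓝 0)) :
    Tendsto (fun i => eLpNorm (fun x => g (f i x) - g (f₀ x)) p μ) l (𝓝 0) := by
  have hbound := ENNReal.Tendsto.const_mul h (Or.inr (ENNReal.coe_ne_top (r := K)))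
  rw [mul_zero] at hbound
  refine tendsto_of_tendsto_of_tendsto_of_le_of_le tendsto_const_nhds hbound
    (fun _ => zero_le) fun i => ?_
  refine eLpNorm_le_nnreal_smul_eLpNorm_of_ae_le_mul (ae_of_all _ fun x => ?_) p
  simpa only [nndist_eq_nnnorm] using hg.nndist_le (f i x) (f₀ x)

theorem LipschitzWith.tendsto_integral_comp [NormedSpace ℝ F] [IsFiniteMeasure μ] {g : E → F}
    {K : ℝ≥0} (hg : LipschitzWith K g) {M : ℝ} (hM : ∀ t, ‖g t‖ ≤ M) {p : ℝ≥0∞} (hp : 1 ≤ p)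
    {ι : Type*} {l : Filter ι} {f : ι → X → E} {f₀ : X → E}
    (hf : ∀ i, AEStronglyMeasurable (f i) μ) (hf₀ : AEStronglyMeasurable f₀ μ)
    (h : Tendsto (fun i => eLpNorm (fun x => f i x - f₀ x) p μ) l (𝓝 0)) :
    Tendsto (fun i => ∫ x, g (f i x) ∂μ) l (𝓝 (∫ x, g (f₀ x) ∂μ)) := by
  have hcomp : ∀ {f : X → E}, AEStronglyMeasurable f μ → AEStronglyMeasurable (g ∘ f) μ :=
    hg.continuous.comp_aestronglyMeasurable
  refine tendsto_integral_of_L1' _ (hcomp hf₀)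
    (Eventually.of_forall fun i => integrable_comp_of_norm_le hg.continuous hM (hf i)) ?_
  exact tendsto_eLpNorm_of_tendsto_eLpNorm_of_le hp (fun i => (hcomp (hf i)).sub (hcomp hf₀))
    (hg.tendsto_eLpNorm_comp_sub h)

end

theorem stmt_7_general {X : Type*} [MeasurableSpace X] (μ : Measure X) [IsFiniteMeasure μ]
    (hμ : 0 < (μ Set.univ).toReal)
    (g : ℝ → ℝ) (L : NNReal)
    (hg_mono : StrictMono g)
    (hg_bdd : ∃ M : ℝ, ∀ t, |g t| ≤ M) (hg_lip : LipschitzWith L g)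
    (C : (X → ℝ) → ℝ)
    (hC : ∀ w : X → ℝ, Measurable w → ∫ x, g (w x + C w) ∂μ = 0)
    (w : ℕ → X → ℝ) (w0 : X → ℝ)
    (hwn : ∀ n, Measurable (w n)) (hw0 : Measurable w0)
    (hL2 : Tendsto (fun n => eLpNorm (fun x => w n x - w0 x) 2 μ) atTop (nhds 0)) :
    Tendsto (fun n => C (w n)) atTop (nhds (C w0)) := by
  obtain ⟨M, hM⟩ := hg_bdd
  have hM' : ∀ t, ‖g t‖ ≤ M := by simpa only [Real.norm_eq_abs] using hM
  have hμ0 : μ ≠ 0 := fun h => by simp [h] at hμ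
  have hint : ∀ v : X → ℝ, Measurable v → ∀ c, Integrable (fun x => g (v x + c)) μ :=
    fun v hv c =>
      integrable_comp_of_norm_le hg_lip.continuous hM' (hv.add_const c).aestronglyMeasurable
  refine tendsto_of_tendsto_monotone_of_apply_eq
    (fun n => monotone_integral_comp_add hg_mono.monotone (hint _ (hwn n)))
    (strictMono_integral_comp_add hμ0 hg_mono (hint _ hw0)) (fun c => ?_)
    (fun n => hC _ (hwn n)) (hC _ hw0)
  refine hg_lip.tendsto_integral_comp hM' one_le_two
    (fun n => ((hwn n).add_const c).aestronglyMeasurable) (hw0.add_const c).aestronglyMeasurable ?_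
  simpa only [add_sub_add_right_eq_sub] using hL2

theorem stmt_7 {X : Type*} [MeasurableSpace X] (μ : Measure X) [IsFiniteMeasure μ]
    (hμ : 0 < (μ Set.univ).toReal)
    (g : ℝ → ℝ) (a b : ℝ) (L : NNReal)
    (hg_cont : Continuous g) (hg_mono : StrictMono g)
    (hg_bdd : ∃ M : ℝ, ∀ t, |g t| ≤ M) (hg_lip : LipschitzWith L g)
    (ha : Tendsto g atBot (nhds a)) (hb : Tendsto g atTop (nhds b))
    (ha0 : a < 0) (h0b : 0 < b)
    (C : (X → ℝ) → ℝ)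
    (hC : ∀ w : X → ℝ, Measurable w → ∫ x, g (w x + C w) ∂μ = 0)
    (w : ℕ → X → ℝ) (w0 : X → ℝ)
    (hwn : ∀ n, Measurable (w n)) (hw0 : Measurable w0)
    (hL2 : Tendsto (fun n => eLpNorm (fun x => w n x - w0 x) 2 μ) atTop (nhds 0)) :
    Tendsto (fun n => C (w n)) atTop (nhds (C w0)) :=
  stmt_7_general μ hμ g L hg_mono hg_bdd hg_lip C hC w w0 hwn hw0 hL2
end

section
/- A necessary condition for existence of a solution of the vortex equations on a compact surface $\Sigma$ with $k_+$ vortices and $k_-$ antivortices is the Bradlow-type bound $-\frac{(1+\tau)|\Sigma|}{2\pi} < k_+ - k_- < \frac{(1-\tau)|\Sigma|}{2\pi}$. Abstractly: if $f : \Sigma \to [-1,1]$ is a measurable function on a finite measure space of total measure $|\Sigma|$, $f$ is not a.e. equal to $+1$ nor a.e. equal to $-1$, $\tau \in (-1,1)$, and $2\pi(k_+ - k_-) = \int_\Sigma f \, d\mu - \tau |\Sigma|$, then $-\frac{(1+\tau)|\Sigma|}{2\pi} < k_+ - k_- < \frac{(1-\tau)|\Sigma|}{2\pi}$. -/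
open MeasureTheory

theorem integral_lt_integral_of_ae_le_of_not_ae_eq {α : Type*} [MeasurableSpace α]
    {μ : Measure α} {f g : α → ℝ} (hf : Integrable f μ) (hg : Integrable g μ)
    (hfg : f ≤ᵐ[μ] g) (hne : ¬ f =ᵐ[μ] g) : ∫ x, f x ∂μ < ∫ x, g x ∂μ :=
  (integral_mono_ae hf hg hfg).lt_of_ne fun h ↦ hne ((integral_eq_iff_of_ae_le hf hg hfg).mp h)

theorem neg_measureReal_univ_lt_integral_lt_measureReal_univ {α : Type*} [MeasurableSpace α]
    {μ : Measure α} [IsFiniteMeasure μ] {f : α → ℝ} (hf : Measurable f)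
    (hf_mem : ∀ x, f x ∈ Set.Icc (-1 : ℝ) 1)
    (hne_one : ¬ f =ᵐ[μ] fun _ ↦ 1) (hne_neg_one : ¬ f =ᵐ[μ] fun _ ↦ -1) :
    -μ.real Set.univ < ∫ x, f x ∂μ ∧ ∫ x, f x ∂μ < μ.real Set.univ := by
  have hfi : Integrable f μ :=
    .of_bound hf.aestronglyMeasurable 1 (.of_forall fun x ↦ abs_le.mpr (hf_mem x))
  have lower := integral_lt_integral_of_ae_le_of_not_ae_eq (integrable_const (-1 : ℝ)) hfi
    (.of_forall fun x ↦ (hf_mem x).1) fun h ↦ hne_neg_one h.symm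
  have upper := integral_lt_integral_of_ae_le_of_not_ae_eq hfi (integrable_const (1 : ℝ))
    (.of_forall fun x ↦ (hf_mem x).2) hne_one
  simp only [integral_const, smul_eq_mul, mul_neg, mul_one] at lower upper
  exact ⟨lower, upper⟩

theorem stmt_11_general {S : Type*} [MeasurableSpace S] (μ : Measure S) [IsFiniteMeasure μ]
    (τ : ℝ)
    (kp km : ℤ)
    (f : S → ℝ) (hfmeas : Measurable f)
    (hfbdd : ∀ x, f x ∈ Set.Icc (-1 : ℝ) 1)
    (hne1 : ¬ (f =ᵐ[μ] fun _ => (1 : ℝ)))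
    (hne2 : ¬ (f =ᵐ[μ] fun _ => (-1 : ℝ)))
    (hflux : 2 * Real.pi * ((kp : ℝ) - km) = (∫ x, f x ∂μ) - τ * (μ Set.univ).toReal) :
    -((1 + τ) * (μ Set.univ).toReal) / (2 * Real.pi) < (kp : ℝ) - km ∧
      (kp : ℝ) - km < (1 - τ) * (μ Set.univ).toReal / (2 * Real.pi) := by
  obtain ⟨lower, upper⟩ :=
    neg_measureReal_univ_lt_integral_lt_measureReal_univ (μ := μ) hfmeas hfbdd hne1 hne2
  rw [measureReal_def] at lower upper
  have hπ : 0 < 2 * Real.pi := by positivity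
  constructor
  · rw [div_lt_iff₀ hπ]
    linarith
  · rw [lt_div_iff₀ hπ]
    linarith

theorem stmt_11 {S : Type*} [MeasurableSpace S] (μ : Measure S) [IsFiniteMeasure μ]
    (hμpos : 0 < (μ Set.univ).toReal)
    (τ : ℝ) (hτ : τ ∈ Set.Ioo (-1 : ℝ) 1)
    (kp km : ℤ)
    (f : S → ℝ) (hfmeas : Measurable f)
    (hfbdd : ∀ x, f x ∈ Set.Icc (-1 : ℝ) 1)
    (hne1 : ¬ (f =ᵐ[μ] fun _ => (1 : ℝ)))
    (hne2 : ¬ (f =ᵐ[μ] fun _ => (-1 : ℝ)))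
    (hflux : 2 * Real.pi * ((kp : ℝ) - km) = (∫ x, f x ∂μ) - τ * (μ Set.univ).toReal) :
    -((1 + τ) * (μ Set.univ).toReal) / (2 * Real.pi) < (kp : ℝ) - km ∧
      (kp : ℝ) - km < (1 - τ) * (μ Set.univ).toReal / (2 * Real.pi) :=
  stmt_11_general μ τ kp km f hfmeas hfbdd hne1 hne2 hflux
end

section
/- Let $b_1, b_2 : \Omega \to \mathbb{C}$ be differentiable functions on an open connected set $\Omega \subset \mathbb{C}^2$ that are translation invariant, i.e. $b_j(z_1 + v, z_2 + v) = b_j(z_1,z_2)$ for all small $v \in \mathbb{C}$, and satisfy the symmetry relations $\partial_{z_j}(b_1 + b_2) = \overline{\partial}_{z_1}\overline{b_j} + \overline{\partial}_{z_2}\overline{b_j}$ and the analogous conjugate relations. Then $b_1 + b_2$ is constant on $\Omega$. -/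
open Complex

/-- Wirtinger derivative in the first variable of a function `ℂ × ℂ → ℂ`. -/
noncomputable def wd1 (f : ℂ × ℂ → ℂ) (p : ℂ × ℂ) : ℂ :=
  (fderiv ℝ f p (1, 0) - Complex.I * fderiv ℝ f p (Complex.I, 0)) / 2

/-- Wirtinger derivative in the second variable. -/
noncomputable def wd2 (f : ℂ × ℂ → ℂ) (p : ℂ × ℂ) : ℂ :=
  (fderiv ℝ f p (0, 1) - Complex.I * fderiv ℝ f p (0, Complex.I)) / 2

/-- Conjugate Wirtinger derivative in the first variable. -/
noncomputable def wdbar1 (f : ℂ × ℂ → ℂ) (p : ℂ × ℂ) : ℂ :=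
  (fderiv ℝ f p (1, 0) + Complex.I * fderiv ℝ f p (Complex.I, 0)) / 2

/-- Conjugate Wirtinger derivative in the second variable. -/
noncomputable def wdbar2 (f : ℂ × ℂ → ℂ) (p : ℂ × ℂ) : ℂ :=
  (fderiv ℝ f p (0, 1) + Complex.I * fderiv ℝ f p (0, Complex.I)) / 2


/-! Translation invariance kills the derivative of each `bⱼ`, hence of each `conj bⱼ`, in every
diagonal direction `(v, v)`. The right-hand sides of the four symmetry relations are exactly such
diagonal derivatives of `conj bⱼ`, so all four Wirtinger derivatives of `b₁ + b₂` vanish. Thus its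
real derivative vanishes on the connected open set `Ω`. -/

open ComplexConjugate Filter Topology

theorem fderiv_apply_eq_zero_of_eventually_const_on_line {E F : Type*} [NormedAddCommGroup E]
    [NormedSpace ℝ E] [NormedAddCommGroup F] [NormedSpace ℝ F] {g : E → F} {p w : E}
    (h : ∀ᶠ t : ℝ in 𝓝 0, g (p + t • w) = g p) : fderiv ℝ g p w = 0 := by
  by_cases hg : DifferentiableAt ℝ g p
  · rw [← hg.lineDeriv_eq_fderiv, lineDeriv, EventuallyEq.deriv_eq (f := fun _ => g p) h,
      deriv_const]
  · simp [fderiv_zero_of_not_differentiableAt hg]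

section Wirtinger

variable {g : ℂ × ℂ → ℂ} {p : ℂ × ℂ}

theorem fderiv_apply_diag_eq_zero (h : ∀ᶠ v in 𝓝 (0 : ℂ), g (p.1 + v, p.2 + v) = g p) (v : ℂ) :
    fderiv ℝ g p (v, v) = 0 :=
  fderiv_apply_eq_zero_of_eventually_const_on_line
    ((Continuous.tendsto' (f := fun t : ℝ => t • v) (by fun_prop) 0 0 (zero_smul ℝ v)).eventually h)

theorem fderiv_conj_apply (v : ℂ × ℂ) :
    fderiv ℝ (fun q => conj (g q)) p v = conj (fderiv ℝ g p v) := by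
  simp_rw [← Complex.star_def, fderiv_star]
  rfl

theorem fderiv_conj_apply_diag_eq_zero
    (h : ∀ᶠ v in 𝓝 (0 : ℂ), g (p.1 + v, p.2 + v) = g p) (v : ℂ) :
    fderiv ℝ (fun q => conj (g q)) p (v, v) = 0 := by
  rw [fderiv_conj_apply, fderiv_apply_diag_eq_zero h, map_zero]

theorem fderiv_apply_diag (v : ℂ) :
    fderiv ℝ g p (v, v) = fderiv ℝ g p (v, 0) + fderiv ℝ g p (0, v) := by
  rw [← map_add, Prod.mk_add_mk, add_zero, zero_add]

theorem wd1_add_wd2 :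
    wd1 g p + wd2 g p = (fderiv ℝ g p (1, 1) - I * fderiv ℝ g p (I, I)) / 2 := by
  rw [wd1, wd2, fderiv_apply_diag, fderiv_apply_diag]
  ring

theorem wdbar1_add_wdbar2 :
    wdbar1 g p + wdbar2 g p = (fderiv ℝ g p (1, 1) + I * fderiv ℝ g p (I, I)) / 2 := by
  rw [wdbar1, wdbar2, fderiv_apply_diag, fderiv_apply_diag]
  ring

theorem fderiv_eq_zero_of_wirtinger_eq_zero (h₁ : wd1 g p = 0) (h₁' : wdbar1 g p = 0)
    (h₂ : wd2 g p = 0) (h₂' : wdbar2 g p = 0) : fderiv ℝ g p = 0 := by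
  have e₁ : fderiv ℝ g p (1, 0) = wd1 g p + wdbar1 g p := by rw [wd1, wdbar1]; ring
  have eI₁ : fderiv ℝ g p (I, 0) = I * (wd1 g p - wdbar1 g p) := by
    rw [wd1, wdbar1]; linear_combination (fderiv ℝ g p (I, 0)) * I_sq
  have e₂ : fderiv ℝ g p (0, 1) = wd2 g p + wdbar2 g p := by rw [wd2, wdbar2]; ring
  have eI₂ : fderiv ℝ g p (0, I) = I * (wd2 g p - wdbar2 g p) := by
    rw [wd2, wdbar2]; linear_combination (fderiv ℝ g p (0, I)) * I_sq
  refine ContinuousLinearMap.prod_ext ?_ ?_ <;>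
    refine ContinuousLinearMap.coe_injective (Complex.basisOneI.ext fun i => ?_) <;>
    fin_cases i <;> simp [e₁, eI₁, e₂, eI₂, h₁, h₁', h₂, h₂']

end Wirtinger

theorem stmt_13 (Ω : Set (ℂ × ℂ)) (hΩo : IsOpen Ω) (hΩc : IsConnected Ω)
    (b₁ b₂ : ℂ × ℂ → ℂ)
    (hd₁ : DifferentiableOn ℝ b₁ Ω) (hd₂ : DifferentiableOn ℝ b₂ Ω)
    -- translation invariance for small translations
    (htrans : ∀ p ∈ Ω, ∃ ε > (0 : ℝ), ∀ v : ℂ, ‖v‖ < ε →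
      (p.1 + v, p.2 + v) ∈ Ω ∧
      b₁ (p.1 + v, p.2 + v) = b₁ p ∧ b₂ (p.1 + v, p.2 + v) = b₂ p)
    -- symmetry relations: ∂_{z_j}(b₁+b₂) = ∂̄_{z₁} b̄_j + ∂̄_{z₂} b̄_j
    (hsym1 : ∀ p ∈ Ω,
      wd1 (fun q => b₁ q + b₂ q) p
        = wdbar1 (fun q => starRingEnd ℂ (b₁ q)) p
          + wdbar2 (fun q => starRingEnd ℂ (b₁ q)) p)
    (hsym2 : ∀ p ∈ Ω,
      wd2 (fun q => b₁ q + b₂ q) p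
        = wdbar1 (fun q => starRingEnd ℂ (b₂ q)) p
          + wdbar2 (fun q => starRingEnd ℂ (b₂ q)) p)
    -- analogous conjugate relations: ∂̄_{z_j}(b₁+b₂) = ∂_{z₁} b̄_j + ∂_{z₂} b̄_j
    (hsym1' : ∀ p ∈ Ω,
      wdbar1 (fun q => b₁ q + b₂ q) p
        = wd1 (fun q => starRingEnd ℂ (b₁ q)) p
          + wd2 (fun q => starRingEnd ℂ (b₁ q)) p)
    (hsym2' : ∀ p ∈ Ω,
      wdbar2 (fun q => b₁ q + b₂ q) p
        = wd1 (fun q => starRingEnd ℂ (b₂ q)) p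
          + wd2 (fun q => starRingEnd ℂ (b₂ q)) p) :
    ∀ p ∈ Ω, ∀ q ∈ Ω, b₁ p + b₂ p = b₁ q + b₂ q := by
  intro p hp q hq
  refine hΩo.is_const_of_fderiv_eq_zero (f := fun q => b₁ q + b₂ q) hΩc.isPreconnected
    (hd₁.add hd₂) (fun x hx => ?_) hp hq
  obtain ⟨ε, hε, hinv⟩ := htrans x hx
  have hsmall : ∀ᶠ v in 𝓝 (0 : ℂ), ‖v‖ < ε :=
    (continuous_norm.tendsto' (0 : ℂ) 0 norm_zero).eventually (eventually_lt_nhds hε)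
  have h₁ := fderiv_conj_apply_diag_eq_zero (hsmall.mono fun v hv => (hinv v hv).2.1)
  have h₂ := fderiv_conj_apply_diag_eq_zero (hsmall.mono fun v hv => (hinv v hv).2.2)
  refine fderiv_eq_zero_of_wirtinger_eq_zero ?_ ?_ ?_ ?_
  · rw [hsym1 x hx, wdbar1_add_wdbar2, h₁, h₁]; simp
  · rw [hsym1' x hx, wd1_add_wd2, h₁, h₁]; simp
  · rw [hsym2 x hx, wdbar1_add_wdbar2, h₂, h₂]; simp
  · rw [hsym2' x hx, wd1_add_wd2, h₂, h₂]; simp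
end
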